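/- arXiv:2109.14087 — 3 statements merged into one kernel-verified Lean document; each statement's English description precedes it below -/
import Mathlib

section
/- The inverse Gamma density f∞(x) = (k^μ / Γ(μ)) · e^{-k/x} / x^{1+μ} on (0,∞), with μ = 1 + 2λ/σ and k = (μ-1)·m_B, is a stationary solution of the Fokker-Planck equation, i.e., it satisfies λ·d/dx[(x - m_B) f(x)] + (σ/2)·d²/dx²[x² f(x)] = 0 for all x > 0. -/
/-!
With `p = (x - m_B) f` and `q = x² f`, the equation reads `(λ p + (σ/2) q')' = 0`. For the inverse
Gamma density one computes `(x² f)' = f · (k + (1 - μ) x)`, and the choice of `μ` and `k` makes the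
flux `λ p + (σ/2) q'` vanish identically on `(0, ∞)`, so its derivative vanishes as well.
-/

open Real Set Topology

theorem deriv_flux_eq_zero_of_flux_eq_zero {p q : ℝ → ℝ} {s : Set ℝ} (hs : IsOpen s) {a b : ℝ}
    (hb : b ≠ 0) (hflux : ∀ y ∈ s, a * p y + b * deriv q y = 0) :
    ∀ x ∈ s, a * deriv p x + b * deriv (deriv q) x = 0 := by
  intro x hx
  have hq' : deriv q =ᶠ[𝓝 x] fun y => -(a / b) * p y := by
    filter_upwards [hs.mem_nhds hx] with y hy
    field_simp
    linear_combination hflux y hy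
  rw [hq'.deriv_eq, deriv_const_mul_field']
  field_simp
  ring

theorem hasDerivAt_sq_mul_exp_neg_div_div_rpow (C k a : ℝ) {x : ℝ} (hx : 0 < x) :
    HasDerivAt (fun y => y ^ 2 * (C * exp (-k / y) / y ^ a))
      (C * exp (-k / x) / x ^ a * (k + (2 - a) * x)) x := by
  have hexp : HasDerivAt (fun y => exp (-k / y)) (exp (-k / x) * (k / x ^ 2)) x := by
    have := ((hasDerivAt_inv hx.ne').const_mul (-k)).exp
    convert this using 1
    · ext y; rw [div_eq_mul_inv]
    · simp only [div_eq_mul_inv]; ring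
  have hpow : HasDerivAt (fun y => y ^ a) (a * x ^ (a - 1)) x :=
    hasDerivAt_rpow_const (Or.inl hx.ne')
  refine ((hasDerivAt_pow 2 x).fun_mul
    ((hexp.const_mul C).fun_div hpow (rpow_pos_of_pos hx a).ne')).congr_deriv ?_
  rw [rpow_sub hx, rpow_one]
  have := (rpow_pos_of_pos hx a).ne'
  field_simp
  ring

theorem inverse_gamma_stationary_general
    (lam sigma mB : ℝ) (hsigma : 0 < sigma)
    (μ k : ℝ) (hμ : μ = 1 + 2 * lam / sigma) (hk : k = (μ - 1) * mB)
    (f : ℝ → ℝ)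
    (hf : ∀ x : ℝ, f x = (k ^ μ / Real.Gamma μ) * Real.exp (-k / x) / x ^ (1 + μ)) :
    ∀ x : ℝ, 0 < x →
      lam * deriv (fun y => (y - mB) * f y) x
        + (sigma / 2) * deriv (deriv (fun y => y ^ 2 * f y)) x = 0 := by
  have hflux : ∀ y ∈ Ioi (0 : ℝ),
      lam * ((y - mB) * f y) + (sigma / 2) * deriv (fun y => y ^ 2 * f y) y = 0 := by
    intro y hy
    rw [show f = _ from funext hf, (hasDerivAt_sq_mul_exp_neg_div_div_rpow _ k (1 + μ) hy).deriv]
    subst hk hμ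
    field_simp
    ring
  exact deriv_flux_eq_zero_of_flux_eq_zero isOpen_Ioi (by positivity) hflux

/-- The inverse Gamma density is a stationary solution of the Fokker-Planck equation. -/
theorem inverse_gamma_stationary
    (lam sigma mB : ℝ) (hlam : 0 < lam) (hsigma : 0 < sigma) (hmB : 0 < mB)
    (μ k : ℝ) (hμ : μ = 1 + 2 * lam / sigma) (hk : k = (μ - 1) * mB)
    (f : ℝ → ℝ)
    (hf : ∀ x : ℝ, f x = (k ^ μ / Real.Gamma μ) * Real.exp (-k / x) / x ^ (1 + μ)) :
    ∀ x : ℝ, 0 < x →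
      lam * deriv (fun y => (y - mB) * f y) x
        + (sigma / 2) * deriv (deriv (fun y => y ^ 2 * f y)) x = 0 :=
  inverse_gamma_stationary_general lam sigma mB hsigma μ k hμ hk f hf
end

section
/- In the Chang–Cooper discretization, the weight δ_{i+1/2} = 1/λ_{i+1/2} + 1/(1 - exp(λ_{i+1/2})) satisfies δ_{i+1/2} ∈ (0,1) for every λ_{i+1/2} ≠ 0, and δ_{i+1/2} → 1/2 as λ_{i+1/2} → 0. -/
/-!
Writing `δ(λ) = (e^λ - 1 - λ) / (λ (e^λ - 1))`, positivity is `e^λ > 1 + λ` together with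
`λ (e^λ - 1) > 0`. The symmetry `δ(-λ) = 1 - δ(λ)` turns positivity into `δ < 1`. As `λ → 0`,
l'Hôpital gives `(e^λ - 1 - λ) / λ² → 1/2`, while `(e^λ - 1) / λ → 1`, the derivative of `exp` at `0`.
-/

open Filter Real Topology

noncomputable def changCooperWeight (x : ℝ) : ℝ := 1 / x + 1 / (1 - exp x)

lemma mul_exp_sub_one_pos {x : ℝ} (hx : x ≠ 0) : 0 < x * (exp x - 1) := by
  rcases hx.lt_or_gt with hneg | hpos
  · exact mul_pos_of_neg_of_neg hneg (sub_neg.2 (exp_lt_one_iff.2 hneg))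
  · exact mul_pos hpos (sub_pos.2 (one_lt_exp_iff.2 hpos))

lemma exp_sub_one_ne_zero {x : ℝ} (hx : x ≠ 0) : exp x - 1 ≠ 0 :=
  right_ne_zero_of_mul (mul_exp_sub_one_pos hx).ne'

namespace changCooperWeight

lemma eq_div {x : ℝ} (hx : x ≠ 0) :
    changCooperWeight x = (exp x - 1 - x) / (x * (exp x - 1)) := by
  have hsub : exp x - 1 ≠ 0 := exp_sub_one_ne_zero hx
  rw [changCooperWeight, ← neg_sub, div_neg]
  field_simp
  ring

lemma pos {x : ℝ} (hx : x ≠ 0) : 0 < changCooperWeight x := by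
  rw [eq_div hx]
  exact div_pos (by linarith [add_one_lt_exp hx]) (mul_exp_sub_one_pos hx)

lemma neg {x : ℝ} (hx : x ≠ 0) : changCooperWeight (-x) = 1 - changCooperWeight x := by
  rw [eq_div hx, eq_div (neg_ne_zero.2 hx), exp_neg]
  have hsub : exp x - 1 ≠ 0 := exp_sub_one_ne_zero hx
  have hsub' : 1 - exp x ≠ 0 := fun h => hsub (by linarith)
  have hexp : exp x ≠ 0 := (exp_pos x).ne'
  field_simp
  ring

lemma lt_one {x : ℝ} (hx : x ≠ 0) : changCooperWeight x < 1 := by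
  linarith [neg hx, pos (neg_ne_zero.2 hx)]

end changCooperWeight

lemma tendsto_exp_sub_one_div : Tendsto (fun x => (exp x - 1) / x) (𝓝[≠] 0) (𝓝 1) := by
  have h := hasDerivAt_iff_tendsto_slope.1 (hasDerivAt_exp 0)
  rw [exp_zero] at h
  exact h.congr fun x => by simp [slope_def_field]

lemma tendsto_exp_sub_one_sub_div_sq :
    Tendsto (fun x => (exp x - 1 - x) / x ^ 2) (𝓝[≠] 0) (𝓝 (1 / 2)) := by
  have hnum : Tendsto (fun x => exp x - 1 - x) (𝓝[≠] 0) (𝓝 0) :=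
    ((by fun_prop : Continuous fun x => exp x - 1 - x).tendsto' 0 0 (by simp)).mono_left
      nhdsWithin_le_nhds
  have hden : Tendsto (fun x : ℝ => x ^ 2) (𝓝[≠] 0) (𝓝 0) :=
    ((continuous_pow 2).tendsto' 0 0 (by simp)).mono_left nhdsWithin_le_nhds
  refine HasDerivAt.lhopital_zero_nhdsNE (f' := fun x => exp x - 1) (g' := fun x => 2 * x)
    (Eventually.of_forall fun x => ((hasDerivAt_exp x).sub_const 1).sub (hasDerivAt_id x))
    (Eventually.of_forall fun x => by simpa using hasDerivAt_pow 2 x)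
    (eventually_mem_nhdsWithin.mono fun x hx => mul_ne_zero two_ne_zero hx) hnum hden ?_
  simpa only [div_div, mul_comm] using tendsto_exp_sub_one_div.div_const 2

lemma tendsto_changCooperWeight : Tendsto changCooperWeight (𝓝[≠] 0) (𝓝 (1 / 2)) := by
  have h := tendsto_exp_sub_one_sub_div_sq.div tendsto_exp_sub_one_div one_ne_zero
  rw [div_one] at h
  refine h.congr' (eventually_mem_nhdsWithin.mono fun x (hx : x ≠ 0) => ?_)
  have hsub : exp x - 1 ≠ 0 := exp_sub_one_ne_zero hx
  rw [changCooperWeight.eq_div hx, Pi.div_apply]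
  field_simp

/-- The Chang–Cooper weight δ(λ) = 1/λ + 1/(1 - e^λ) lies in (0,1) for λ ≠ 0 and
tends to 1/2 as λ → 0. -/
theorem chang_cooper_weight
    (δ : ℝ → ℝ) (hδ : ∀ lam, δ lam = 1 / lam + 1 / (1 - Real.exp lam)) :
    (∀ lam : ℝ, lam ≠ 0 → δ lam ∈ Set.Ioo (0:ℝ) 1) ∧
    Tendsto δ (nhdsWithin 0 {x : ℝ | x ≠ 0}) (nhds (1 / 2)) := by
  obtain rfl : δ = changCooperWeight := funext hδ
  exact ⟨fun _ hx => ⟨changCooperWeight.pos hx, changCooperWeight.lt_one hx⟩,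
    tendsto_changCooperWeight⟩
end

section
/- For the SEIR fake-news ODE system with α, η ∈ [0,1], β, γ, δ > 0 and nonnegative initial data with S(0)+E(0)+I(0)+R(0) = 1, the compartments remain nonnegative for all t ≥ 0: S(t), E(t), I(t), R(t) ≥ 0. -/
/-!
Let `V` be the sum of the squared negative parts `min x 0 ^ 2` of `S`, `E`, `I`. It is
differentiable with `V 0 = 0`, and on a compact time interval, where `S` and `I` are bounded,
the vector field is quasi-positive in the quantitative form `V' ≤ K V`: each compartment can
only be driven below zero by another compartment that already is. Grönwall's inequality then
forces `V = 0`. Finally `R' = ηδE + αγI ≥ 0`, so `R` is nondecreasing.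
-/

open Set Filter Topology

theorem hasDerivAt_sq_min_zero (a : ℝ) :
    HasDerivAt (fun x : ℝ => min x 0 ^ 2) (2 * min a 0) a := by
  rcases lt_trichotomy a 0 with ha | rfl | ha
  · have heq : (fun x : ℝ => min x 0 ^ 2) =ᶠ[𝓝 a] fun x => x ^ 2 := by
      filter_upwards [Iio_mem_nhds ha] with x hx
      rw [min_eq_left (le_of_lt hx)]
    rw [min_eq_left ha.le]
    simpa using (hasDerivAt_pow 2 a).congr_of_eventuallyEq heq
  · rw [min_self, mul_zero, hasDerivAt_iff_isLittleO_nhds_zero]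
    refine (Asymptotics.IsBigO.of_bound 1 (Eventually.of_forall fun h => ?_)).trans_isLittleO
      (Asymptotics.isLittleO_pow_id (n := 2) one_lt_two)
    have : |min h 0| ≤ |h| := by
      rcases le_total h 0 with hh | hh <;> simp [hh, abs_nonneg]
    simpa [sq_abs] using pow_le_pow_left₀ (abs_nonneg _) this 2
  · have heq : (fun x : ℝ => min x 0 ^ 2) =ᶠ[𝓝 a] fun _ => 0 := by
      filter_upwards [Ioi_mem_nhds ha] with x hx
      simp [min_eq_right (le_of_lt (mem_Ioi.mp hx))]
    rw [min_eq_right ha.le, mul_zero]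
    exact (hasDerivAt_const a 0).congr_of_eventuallyEq heq

theorem HasDerivAt.sq_min_zero {f : ℝ → ℝ} {f' t : ℝ} (hf : HasDerivAt f f' t) :
    HasDerivAt (fun x => min (f x) 0 ^ 2) (2 * min (f t) 0 * f') t :=
  (hasDerivAt_sq_min_zero (f t)).comp t hf

theorem le_mul_exp_of_deriv_right_le_mul {f f' : ℝ → ℝ} {K a b : ℝ}
    (hf : ContinuousOn f (Icc a b)) (hf' : ∀ x ∈ Ico a b, HasDerivWithinAt f (f' x) (Ici x) x)
    (bound : ∀ x ∈ Ico a b, f' x ≤ K * f x) :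
    ∀ x ∈ Icc a b, f x ≤ f a * Real.exp (K * (x - a)) := by
  intro x hx
  rw [← gronwallBound_ε0]
  refine le_gronwallBound_of_liminf_deriv_right_le hf (fun x hx r hr => ?_) le_rfl
    (by simpa using bound) x hx
  simpa [slope_def_field, div_eq_inv_mul] using
    (hf' x hx).liminf_right_slope_le hr

section MinZero

theorem min_zero_mul_self {R : Type*} [MonoidWithZero R] [LinearOrder R] (x : R) :
    min x 0 * x = min x 0 ^ 2 := by
  rcases le_total x 0 with hx | hx <;> simp [hx, sq]

variable {R : Type*} [CommRing R] [LinearOrder R] [IsStrictOrderedRing R]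

theorem min_zero_mul_le_mul_min_zero (x y : R) : min x 0 * y ≤ min x 0 * min y 0 :=
  mul_le_mul_of_nonpos_left (min_le_left y 0) (min_le_right x 0)

theorem mul_min_zero_add_min_zero_le_mul {x y C : R} (hx : |x| ≤ C) (hy : |y| ≤ C) :
    C * (min x 0 + min y 0) ≤ x * y := by
  rw [abs_le] at hx hy
  rcases le_total x 0 with hx0 | hx0 <;> rcases le_total y 0 with hy0 | hy0 <;>
    simp only [hx0, hy0, min_eq_left, min_eq_right] <;> nlinarith

end MinZero

theorem seir_deriv_sq_min_zero_le {β γ δ α η C s e i : ℝ}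
    (hβ : 0 ≤ β) (hγ : 0 ≤ γ) (hδ : 0 ≤ δ)
    (hα : α ∈ Icc (0 : ℝ) 1) (hη : η ∈ Icc (0 : ℝ) 1)
    (hs : |s| ≤ C) (hi : |i| ≤ C) :
    2 * min s 0 * (-β * s * i + (1 - α) * γ * i) + 2 * min e 0 * (β * s * i - δ * e)
        + 2 * min i 0 * ((1 - η) * δ * e - γ * i)
      ≤ (3 * β * C + γ + δ) * (min s 0 ^ 2 + min e 0 ^ 2 + min i 0 ^ 2) := by
  obtain ⟨hα0, hα1⟩ := hα
  obtain ⟨hη0, hη1⟩ := hη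
  have hC : 0 ≤ C := (abs_nonneg s).trans hs
  have hsi := two_mul_le_add_sq (min s 0) (min i 0)
  have hes := two_mul_le_add_sq (min e 0) (min s 0)
  have hei := two_mul_le_add_sq (min e 0) (min i 0)
  have hS : 2 * min s 0 * (-β * s * i + (1 - α) * γ * i)
      ≤ 2 * β * C * min s 0 ^ 2 + γ * (min s 0 ^ 2 + min i 0 ^ 2) := by
    have hsi' := min_zero_mul_le_mul_min_zero s i
    have hCi : -i ≤ C := (neg_le_abs i).trans hi
    have hexp : 2 * min s 0 * (-β * s * i + (1 - α) * γ * i)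
        = 2 * β * min s 0 ^ 2 * -i + 2 * ((1 - α) * γ) * (min s 0 * i) := by
      rw [← min_zero_mul_self]; ring
    rw [hexp]
    linarith [mul_le_mul_of_nonneg_left hCi (mul_nonneg hβ (sq_nonneg (min s 0))),
      mul_le_mul_of_nonneg_left hsi' (mul_nonneg (sub_nonneg.2 hα1) hγ),
      mul_le_mul_of_nonneg_left hsi (mul_nonneg (sub_nonneg.2 hα1) hγ),
      mul_nonneg (mul_nonneg hα0 hγ) (sq_nonneg (min s 0)),
      mul_nonneg (mul_nonneg hα0 hγ) (sq_nonneg (min i 0))]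
  have hE : 2 * min e 0 * (β * s * i - δ * e)
      ≤ β * C * (2 * min e 0 ^ 2 + min s 0 ^ 2 + min i 0 ^ 2) := by
    have hesi :=
      mul_le_mul_of_nonpos_left (mul_min_zero_add_min_zero_le_mul hs hi) (min_le_right e 0)
    have hexp : 2 * min e 0 * (β * s * i - δ * e)
        = 2 * β * (min e 0 * (s * i)) - 2 * δ * min e 0 ^ 2 := by
      rw [← min_zero_mul_self]; ring
    rw [hexp]
    linarith [mul_le_mul_of_nonneg_left hesi hβ, mul_nonneg hδ (sq_nonneg (min e 0)),
      mul_le_mul_of_nonneg_left hes (mul_nonneg hβ hC),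
      mul_le_mul_of_nonneg_left hei (mul_nonneg hβ hC)]
  have hI : 2 * min i 0 * ((1 - η) * δ * e - γ * i) ≤ δ * (min e 0 ^ 2 + min i 0 ^ 2) := by
    have hie := min_zero_mul_le_mul_min_zero i e
    have hexp : 2 * min i 0 * ((1 - η) * δ * e - γ * i)
        = 2 * ((1 - η) * δ) * (min i 0 * e) - 2 * γ * min i 0 ^ 2 := by
      rw [← min_zero_mul_self]; ring
    rw [hexp]
    linarith [mul_le_mul_of_nonneg_left hie (mul_nonneg (sub_nonneg.2 hη1) hδ),
      mul_le_mul_of_nonneg_left hei (mul_nonneg (sub_nonneg.2 hη1) hδ),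
      mul_nonneg hγ (sq_nonneg (min i 0)),
      mul_nonneg (mul_nonneg hη0 hδ) (sq_nonneg (min e 0)),
      mul_nonneg (mul_nonneg hη0 hδ) (sq_nonneg (min i 0))]
  linarith [mul_nonneg (mul_nonneg hβ hC) (sq_nonneg (min e 0)),
    mul_nonneg (mul_nonneg hβ hC) (sq_nonneg (min i 0)),
    mul_nonneg hγ (sq_nonneg (min e 0)), mul_nonneg hδ (sq_nonneg (min s 0))]

theorem seir_SEI_nonneg {S E I : ℝ → ℝ} {β γ δ α η T : ℝ}
    (hβ : 0 ≤ β) (hγ : 0 ≤ γ) (hδ : 0 ≤ δ)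
    (hα : α ∈ Icc (0 : ℝ) 1) (hη : η ∈ Icc (0 : ℝ) 1)
    (hS : ∀ t, HasDerivAt S (-β * S t * I t + (1 - α) * γ * I t) t)
    (hE : ∀ t, HasDerivAt E (β * S t * I t - δ * E t) t)
    (hI : ∀ t, HasDerivAt I ((1 - η) * δ * E t - γ * I t) t)
    (hS0 : 0 ≤ S 0) (hE0 : 0 ≤ E 0) (hI0 : 0 ≤ I 0) (hT : 0 ≤ T) :
    0 ≤ S T ∧ 0 ≤ E T ∧ 0 ≤ I T := by
  have hSI : Continuous fun t => (S t, I t) := continuous_iff_continuousAt.2 fun t =>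
    (hS t).continuousAt.prodMk (hI t).continuousAt
  obtain ⟨C, hC⟩ :=
    (isCompact_Icc (a := 0) (b := T)).exists_bound_of_continuousOn hSI.continuousOn
  set V := fun t => min (S t) 0 ^ 2 + min (E t) 0 ^ 2 + min (I t) 0 ^ 2
  have hV : ∀ t, HasDerivAt V (2 * min (S t) 0 * (-β * S t * I t + (1 - α) * γ * I t)
      + 2 * min (E t) 0 * (β * S t * I t - δ * E t)
      + 2 * min (I t) 0 * ((1 - η) * δ * E t - γ * I t)) t := fun t =>
    ((hS t).sq_min_zero.add (hE t).sq_min_zero).add (hI t).sq_min_zero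
  have hVT : V T ≤ 0 := by
    have := le_mul_exp_of_deriv_right_le_mul (K := 3 * β * C + γ + δ)
      (continuous_iff_continuousAt.2 fun t => (hV t).continuousAt).continuousOn
      (fun t _ => (hV t).hasDerivWithinAt)
      (fun t ht => seir_deriv_sq_min_zero_le hβ hγ hδ hα hη
        ((norm_fst_le _).trans (hC t (Ico_subset_Icc_self ht)))
        ((norm_snd_le _).trans (hC t (Ico_subset_Icc_self ht))))
      T ⟨hT, le_rfl⟩
    simpa [V, hS0, hE0, hI0] using this
  have hnonneg {x : ℝ} (hx : min x 0 ^ 2 ≤ 0) : 0 ≤ x :=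
    min_eq_right_iff.1 ((sq_nonpos_iff _).1 hx)
  refine ⟨hnonneg ?_, hnonneg ?_, hnonneg ?_⟩ <;>
    linarith [sq_nonneg (min (S T) 0), sq_nonneg (min (E T) 0), sq_nonneg (min (I T) 0)]

theorem seir_nonneg_general
    (S E I R : ℝ → ℝ) (β γ δ α η : ℝ)
    (hβ : 0 < β) (hγ : 0 < γ) (hδ : 0 < δ)
    (hα : α ∈ Set.Icc (0:ℝ) 1) (hη : η ∈ Set.Icc (0:ℝ) 1)
    (hS : ∀ t, HasDerivAt S (-β * S t * I t + (1 - α) * γ * I t) t)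
    (hE : ∀ t, HasDerivAt E (β * S t * I t - δ * E t) t)
    (hI : ∀ t, HasDerivAt I ((1 - η) * δ * E t - γ * I t) t)
    (hR : ∀ t, HasDerivAt R (η * δ * E t + α * γ * I t) t)
    (hS0 : 0 ≤ S 0) (hE0 : 0 ≤ E 0) (hI0 : 0 ≤ I 0) (hR0 : 0 ≤ R 0) :
    ∀ t : ℝ, 0 ≤ t → 0 ≤ S t ∧ 0 ≤ E t ∧ 0 ≤ I t ∧ 0 ≤ R t := by
  have hSEI (t : ℝ) (ht : 0 ≤ t) : 0 ≤ S t ∧ 0 ≤ E t ∧ 0 ≤ I t :=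
    seir_SEI_nonneg hβ.le hγ.le hδ.le hα hη hS hE hI hS0 hE0 hI0 ht
  have hRmono : MonotoneOn R (Ici 0) := by
    refine monotoneOn_of_hasDerivWithinAt_nonneg (convex_Ici 0)
      (continuous_iff_continuousAt.2 fun t => (hR t).continuousAt).continuousOn
      (fun t _ => (hR t).hasDerivWithinAt) fun t ht => ?_
    rw [interior_Ici] at ht
    obtain ⟨-, hEt, hIt⟩ := hSEI t (le_of_lt ht)
    have hα0 := hα.1
    have hη0 := hη.1
    positivity
  intro t ht
  obtain ⟨hSt, hEt, hIt⟩ := hSEI t ht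
  exact ⟨hSt, hEt, hIt, hR0.trans (hRmono self_mem_Ici ht ht)⟩

/-- Nonnegativity of all compartments of the SEIR fake-news system for all t ≥ 0. -/
theorem seir_nonneg
    (S E I R : ℝ → ℝ) (β γ δ α η : ℝ)
    (hβ : 0 < β) (hγ : 0 < γ) (hδ : 0 < δ)
    (hα : α ∈ Set.Icc (0:ℝ) 1) (hη : η ∈ Set.Icc (0:ℝ) 1)
    (hS : ∀ t, HasDerivAt S (-β * S t * I t + (1 - α) * γ * I t) t)
    (hE : ∀ t, HasDerivAt E (β * S t * I t - δ * E t) t)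
    (hI : ∀ t, HasDerivAt I ((1 - η) * δ * E t - γ * I t) t)
    (hR : ∀ t, HasDerivAt R (η * δ * E t + α * γ * I t) t)
    (hS0 : 0 ≤ S 0) (hE0 : 0 ≤ E 0) (hI0 : 0 ≤ I 0) (hR0 : 0 ≤ R 0)
    (hsum : S 0 + E 0 + I 0 + R 0 = 1) :
    ∀ t : ℝ, 0 ≤ t → 0 ≤ S t ∧ 0 ≤ E t ∧ 0 ≤ I t ∧ 0 ≤ R t :=
  seir_nonneg_general S E I R β γ δ α η hβ hγ hδ hα hη hS hE hI hR hS0 hE0 hI0 hR0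
end
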